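/- Let (ν_i) be a sequence of strictly aperiodic probability measures on ℤ such that E(ν_i) = 0 for all i, there is a constant B with ∑_{i=1}^n m₂(ν_i)² ≤ B·n for all n, and there exist a constant C > 0 and an integer N₀ > 0 such that |ν̂_n(t)| ≤ e^{−Ct²} for all n > N₀ and all t ∈ [−1/2, 1/2). Let μ_n = ν₁ * … * ν_n. Then there is a constant C' such that for every k ≥ 1, every pair of integers n, n+1 with 4^{k−1} ≤ n < n + 1 ≤ 4^k, and every t ∈ [−1/2, 1/2), we have |μ̂_n(t) − μ̂_{n+1}(t)| ≤ C' · m₂(ν_{n+1}) / 4^k. -/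

import Mathlib

open scoped ENNReal NNReal BigOperators
open MeasureTheory

noncomputable section

/-- A probability measure on ℤ, viewed as a nonnegative function summing to 1. -/
def IsProbZ (ν : ℤ → ℝ) : Prop := (∀ k, 0 ≤ ν k) ∧ HasSum ν 1

/-- Fourier transform of a measure on ℤ: ν̂(t) = ∑ₖ ν(k) e^{-2πikt}. -/
def fourierZ (ν : ℤ → ℝ) (t : ℝ) : ℂ :=
  ∑' k : ℤ, (ν k : ℂ) * Complex.exp ((-2 * (Real.pi : ℂ) * Complex.I) * (k : ℂ) * (t : ℂ))

/-- p-th moment of a measure on ℤ. -/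
def moment (p : ℝ) (ν : ℤ → ℝ) : ℝ := ∑' k : ℤ, |(k : ℝ)| ^ p * ν k

/-- ν is strictly aperiodic: its support is not contained in any coset of a
proper subgroup of ℤ. -/
def StrictlyAperiodic (ν : ℤ → ℝ) : Prop :=
  ¬ ∃ (H : AddSubgroup ℤ) (a : ℤ), H ≠ ⊤ ∧ ∀ k, ν k ≠ 0 → k - a ∈ H

/-- Convolution of two measures on ℤ. -/
def convZ (ν₁ ν₂ : ℤ → ℝ) : ℤ → ℝ := fun k => ∑' j : ℤ, ν₁ j * ν₂ (k - j)

/-- `convProd ν n = ν 1 * ⋯ * ν n` (convolution product), with `convProd ν 0 = δ₀`. -/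
def convProd (ν : ℕ → ℤ → ℝ) : ℕ → ℤ → ℝ
  | 0 => fun k => if k = 0 then 1 else 0
  | n + 1 => convZ (convProd ν n) (ν (n + 1))

/-- Variation ρ-norm of a sequence of reals over an index set `I ⊆ ℕ`:
the sup over nondecreasing sequences with values in `I` of
`(∑ⱼ |x_{n(j)} - x_{n(j+1)}|^ρ)^{1/ρ}`, valued in `ℝ≥0∞`. -/
def vNorm (ρ : ℝ) (I : Set ℕ) (x : ℕ → ℝ) : ℝ≥0∞ :=
  ⨆ (n : ℕ → ℕ) (_ : Monotone n) (_ : ∀ j, n j ∈ I),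
    (∑' j : ℕ, (ENNReal.ofReal |x (n j) - x (n (j + 1))|) ^ ρ) ^ (1 / ρ)

/-- Oscillation s-norm of a sequence of reals relative to the increasing
sequence `nk` of indices. -/
def oNorm (s : ℝ) (nk : ℕ → ℕ) (x : ℕ → ℝ) : ℝ≥0∞ :=
  (∑' k : ℕ,
    (⨆ (n : ℕ) (_ : nk k ≤ n ∧ n ≤ nk (k + 1)), ENNReal.ofReal |x n - x (nk k)|) ^ s) ^ (1 / s)

/-- Action of a measure on ℤ on a function via a (bi-)measure-preserving map:
`μ f (x) = ∑ⱼ μ(j) f(T^j x)`. -/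
def act {X : Type*} (T : Equiv.Perm X) (μ : ℤ → ℝ) (f : X → ℝ) (x : X) : ℝ :=
  ∑' j : ℤ, μ j * f ((T ^ j) x)

end


/-!
Writing `μ̂ₙ` for the Fourier transform of `μₙ = ν₁ * ⋯ * νₙ`, we have
`μ̂ₙ - μ̂ₙ₊₁ = μ̂ₙ (1 - ν̂ₙ₊₁)`. Since `νₙ₊₁` has mean zero, the first-order term of
`e^{-2πikt}` integrates away and `|1 - ν̂ₙ₊₁(t)| ≤ 8π² t² m₂(νₙ₊₁)`. Past `N₀` every factor
of `μ̂ₙ` is at most `e^{-Ct²}`, so `t² |μ̂ₙ(t)| ≤ e^{CN₀/4} t² e^{-Cnt²} ≤ e^{CN₀/4} / (Cn)`,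
and `4^{k+1} ≤ 4n` on the block containing `n`.
-/

open Real

theorem hasSum_tsum_mul_sub {G R : Type*} [AddCommGroup G] [NormedRing R] [CompleteSpace R]
    {f g : G → R} (hf : Summable fun j => ‖f j‖) (hg : Summable fun j => ‖g j‖) :
    HasSum (fun k => ∑' j, f j * g (k - j)) ((∑' j, f j) * ∑' j, g j) := by
  let e : G × G ≃ G × G :=
    (Equiv.prodShear (Equiv.refl G) Equiv.addLeft).trans (Equiv.prodComm G G)
  have hprod : HasSum (fun p : G × G => f p.1 * g p.2) ((∑' j, f j) * ∑' j, g j) := by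
    rw [tsum_mul_tsum_of_summable_norm hf hg]
    exact (summable_mul_of_summable_norm hf hg).hasSum
  have hshear : HasSum (fun p : G × G => f p.2 * g (p.1 - p.2)) ((∑' j, f j) * ∑' j, g j) := by
    rw [← e.hasSum_iff]
    convert hprod using 2 with p
    simp [e]
  exact hshear.prod_fiberwise fun k => (hshear.summable.prod_factor k).hasSum

noncomputable def charZ (t : ℝ) (k : ℤ) : ℂ :=
  Complex.exp (-2 * π * Complex.I * k * t)

section FourierZ

variable {μ ν : ℤ → ℝ}

theorem fourierZ_eq_tsum_charZ (ν : ℤ → ℝ) (t : ℝ) :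
    fourierZ ν t = ∑' k, (ν k : ℂ) * charZ t k := rfl

theorem charZ_eq_exp_I_mul (t : ℝ) (k : ℤ) :
    charZ t k = Complex.exp (Complex.I * ((-2 * π * k * t : ℝ) : ℂ)) := by
  rw [charZ]; push_cast; ring_nf

theorem norm_charZ (t : ℝ) (k : ℤ) : ‖charZ t k‖ = 1 := by
  rw [charZ_eq_exp_I_mul, mul_comm, Complex.norm_exp_ofReal_mul_I]

theorem charZ_add (t : ℝ) (j m : ℤ) : charZ t (j + m) = charZ t j * charZ t m := by
  simp only [charZ, ← Complex.exp_add]; push_cast; ring_nf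

theorem norm_ofReal_mul_charZ (ν : ℤ → ℝ) (t : ℝ) (k : ℤ) :
    ‖(ν k : ℂ) * charZ t k‖ = |ν k| := by
  rw [norm_mul, norm_charZ, mul_one, Complex.norm_real, Real.norm_eq_abs]

theorem summable_norm_ofReal_mul_charZ (hν : Summable ν) (t : ℝ) :
    Summable fun k => ‖(ν k : ℂ) * charZ t k‖ := by
  simpa only [norm_ofReal_mul_charZ] using hν.abs

theorem hasSum_fourierZ (hν : Summable ν) (t : ℝ) :
    HasSum (fun k => (ν k : ℂ) * charZ t k) (fourierZ ν t) :=
  (summable_norm_ofReal_mul_charZ hν t).of_norm.hasSum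

theorem IsProbZ.norm_fourierZ_le_one (hν : IsProbZ ν) (t : ℝ) : ‖fourierZ ν t‖ ≤ 1 :=
  (hasSum_fourierZ hν.2.summable t).norm_le_of_bounded hν.2 fun k => by
    rw [norm_ofReal_mul_charZ, abs_of_nonneg (hν.1 k)]

theorem fourierZ_convZ (hμ : Summable μ) (hν : Summable ν) (t : ℝ) :
    fourierZ (convZ μ ν) t = fourierZ μ t * fourierZ ν t := by
  have h := hasSum_tsum_mul_sub (summable_norm_ofReal_mul_charZ hμ t)
    (summable_norm_ofReal_mul_charZ hν t)
  rw [(hasSum_fourierZ hμ t).tsum_eq, (hasSum_fourierZ hν t).tsum_eq] at h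
  rw [← h.tsum_eq, fourierZ_eq_tsum_charZ]
  refine tsum_congr fun k => ?_
  have hk : ∀ j, ((μ j : ℂ) * charZ t j) * ((ν (k - j) : ℂ) * charZ t (k - j)) =
      ((μ j * ν (k - j) : ℝ) : ℂ) * charZ t k := fun j => by
    rw [← add_sub_cancel j k, charZ_add, add_sub_cancel_left]; push_cast; ring
  simp only [hk, tsum_mul_right, convZ, Complex.ofReal_tsum]

theorem IsProbZ.convZ (hμ : IsProbZ μ) (hν : IsProbZ ν) : IsProbZ (convZ μ ν) := by
  have hnorm : ∀ {ν : ℤ → ℝ}, IsProbZ ν → Summable fun k => ‖ν k‖ := fun hν => by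
    simpa only [Real.norm_eq_abs] using hν.2.summable.abs
  refine ⟨fun k => tsum_nonneg fun j => mul_nonneg (hμ.1 j) (hν.1 (k - j)), ?_⟩
  have h := hasSum_tsum_mul_sub (hnorm hμ) (hnorm hν)
  rwa [hμ.2.tsum_eq, hν.2.tsum_eq, one_mul] at h

theorem moment_two_nonneg (hν : ∀ k, 0 ≤ ν k) : 0 ≤ moment 2 ν :=
  tsum_nonneg fun k => mul_nonneg (by positivity) (hν k)

theorem norm_exp_I_mul_ofReal_sub_one_sub_le (x : ℝ) :
    ‖Complex.exp (Complex.I * x) - 1 - Complex.I * x‖ ≤ 2 * x ^ 2 := by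
  have hIx : ‖Complex.I * x‖ = |x| := by simp
  rcases le_or_gt |x| 1 with hx | hx
  · have h := Complex.norm_exp_sub_one_sub_id_le (hIx.trans_le hx)
    rw [hIx, sq_abs] at h
    nlinarith [sq_nonneg x]
  · calc ‖Complex.exp (Complex.I * x) - 1 - Complex.I * x‖
        ≤ ‖Complex.exp (Complex.I * x) - 1‖ + ‖Complex.I * x‖ := norm_sub_le _ _
      _ ≤ |x| + |x| := by
        rw [hIx]; gcongr; exact Real.norm_exp_I_mul_ofReal_sub_one_le
      _ ≤ 2 * x ^ 2 := by nlinarith [sq_abs x]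

theorem IsProbZ.norm_fourierZ_sub_one_le (hν : IsProbZ ν)
    (hm : Summable fun k : ℤ => |(k : ℝ)| ^ (2 : ℝ) * ν k)
    (hmean : HasSum (fun k : ℤ => (k : ℝ) * ν k) 0) (t : ℝ) :
    ‖fourierZ ν t - 1‖ ≤ 8 * π ^ 2 * t ^ 2 * moment 2 ν := by
  set θ : ℤ → ℝ := fun k => -2 * π * k * t
  -- subtracting the vanishing first moment leaves only second-order Taylor remainders
  have hsum : HasSum
      (fun k => (ν k : ℂ) * (Complex.exp (Complex.I * θ k) - 1 - Complex.I * θ k))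
      (fourierZ ν t - 1) := by
    have h1 := Complex.hasSum_ofReal.mpr hν.2
    have h2 := (Complex.hasSum_ofReal.mpr hmean).mul_left (Complex.I * (-2 * π * t : ℝ))
    have h := ((hasSum_fourierZ hν.2.summable t).sub h1).sub h2
    simp only [Complex.ofReal_zero, Complex.ofReal_one, mul_zero, sub_zero] at h
    refine (congrArg (HasSum · (fourierZ ν t - 1)) (funext fun k => ?_)).mpr h
    simp only [θ, charZ_eq_exp_I_mul]; push_cast; ring
  refine hsum.norm_le_of_bounded (hm.hasSum.mul_left (8 * π ^ 2 * t ^ 2)) fun k => ?_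
  rw [norm_mul, Complex.norm_real, Real.norm_eq_abs, abs_of_nonneg (hν.1 k)]
  calc ν k * ‖Complex.exp (Complex.I * θ k) - 1 - Complex.I * θ k‖
      ≤ ν k * (2 * θ k ^ 2) :=
        mul_le_mul_of_nonneg_left (norm_exp_I_mul_ofReal_sub_one_sub_le _) (hν.1 k)
    _ = 8 * π ^ 2 * t ^ 2 * (|(k : ℝ)| ^ (2 : ℝ) * ν k) := by
        rw [Real.rpow_two, sq_abs]; ring

end FourierZ

theorem sq_mul_exp_neg_mul_sq_le {a : ℝ} (ha : 0 < a) (t : ℝ) :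
    t ^ 2 * exp (-(a * t ^ 2)) ≤ 1 / a := by
  rw [exp_neg, ← div_eq_mul_inv, div_le_div_iff₀ (exp_pos _) ha]
  nlinarith [add_one_le_exp (a * t ^ 2)]

section ConvProd

variable {ν : ℕ → ℤ → ℝ} (hν : ∀ i, 1 ≤ i → IsProbZ (ν i))
include hν

theorem isProbZ_convProd (n : ℕ) : IsProbZ (convProd ν n) := by
  induction n with
  | zero => exact ⟨fun k => by simp only [convProd]; split <;> norm_num, hasSum_ite_eq 0 1⟩
  | succ n ih => exact ih.convZ (hν (n + 1) n.succ_pos)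

theorem fourierZ_convProd_succ (n : ℕ) (t : ℝ) :
    fourierZ (convProd ν (n + 1)) t = fourierZ (convProd ν n) t * fourierZ (ν (n + 1)) t :=
  fourierZ_convZ (isProbZ_convProd hν n).2.summable (hν (n + 1) n.succ_pos).2.summable t

variable {C : ℝ} {N₀ : ℕ} {t : ℝ}
  (hdecay : ∀ i, N₀ < i → ‖fourierZ (ν i) t‖ ≤ exp (-C * t ^ 2))
include hdecay

theorem norm_fourierZ_convProd_le (hC : 0 ≤ C) (n : ℕ) :
    ‖fourierZ (convProd ν n) t‖ ≤ exp (-C * (n - N₀) * t ^ 2) := by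
  have one_le : ∀ m : ℕ, m ≤ N₀ → 1 ≤ exp (-C * (m - N₀) * t ^ 2) := fun m hm => by
    have : 0 ≤ C * (N₀ - m) * t ^ 2 := by
      have := sub_nonneg.2 (Nat.cast_le (α := ℝ).2 hm)
      positivity
    exact one_le_exp (by linarith)
  induction n with
  | zero =>
    exact (isProbZ_convProd hν 0).norm_fourierZ_le_one t |>.trans (one_le 0 N₀.zero_le)
  | succ n ih =>
    rw [fourierZ_convProd_succ hν, norm_mul]
    by_cases hn : N₀ < n + 1
    · calc _ ≤ exp (-C * (n - N₀) * t ^ 2) * exp (-C * t ^ 2) :=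
            mul_le_mul ih (hdecay _ hn) (norm_nonneg _) (exp_nonneg _)
        _ = _ := by rw [← exp_add]; push_cast; ring_nf
    · calc _ ≤ 1 * 1 := mul_le_mul ((isProbZ_convProd hν n).norm_fourierZ_le_one t)
            ((hν (n + 1) n.succ_pos).norm_fourierZ_le_one t) (norm_nonneg _) zero_le_one
        _ ≤ _ := by rw [one_mul]; exact one_le _ (not_lt.mp hn)

theorem sq_mul_norm_fourierZ_convProd_le (hC : 0 < C) (ht : t ^ 2 ≤ 1 / 4) {n : ℕ}
    (hn : 0 < n) : t ^ 2 * ‖fourierZ (convProd ν n) t‖ ≤ exp (C * N₀ / 4) / (C * n) := by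
  have hCn : 0 < C * n := by positivity
  calc t ^ 2 * ‖fourierZ (convProd ν n) t‖
      ≤ t ^ 2 * exp (-C * (n - N₀) * t ^ 2) :=
        mul_le_mul_of_nonneg_left (norm_fourierZ_convProd_le hν hdecay hC.le n) (sq_nonneg t)
    _ = exp (C * N₀ * t ^ 2) * (t ^ 2 * exp (-(C * n * t ^ 2))) := by
        rw [mul_left_comm, ← exp_add]; ring_nf
    _ ≤ exp (C * N₀ / 4) * (1 / (C * n)) := by
        gcongr
        · linarith [mul_le_mul_of_nonneg_left ht (by positivity : (0 : ℝ) ≤ C * N₀)]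
        · exact sq_mul_exp_neg_mul_sq_le hCn t
    _ = exp (C * N₀ / 4) / (C * n) := mul_one_div _ _

theorem norm_fourierZ_convProd_sub_succ_le (hC : 0 < C) (ht : t ^ 2 ≤ 1 / 4) {n : ℕ}
    (hn : 0 < n) (hm : Summable fun k : ℤ => |(k : ℝ)| ^ (2 : ℝ) * ν (n + 1) k)
    (hmean : HasSum (fun k : ℤ => (k : ℝ) * ν (n + 1) k) 0) :
    ‖fourierZ (convProd ν n) t - fourierZ (convProd ν (n + 1)) t‖ ≤
      8 * π ^ 2 * exp (C * N₀ / 4) / C * moment 2 (ν (n + 1)) / n := by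
  have hνn := hν (n + 1) n.succ_pos
  have hM := moment_two_nonneg hνn.1
  rw [fourierZ_convProd_succ hν, ← mul_one_sub, norm_mul, norm_sub_rev]
  calc ‖fourierZ (convProd ν n) t‖ * ‖fourierZ (ν (n + 1)) t - 1‖
      ≤ ‖fourierZ (convProd ν n) t‖ * (8 * π ^ 2 * t ^ 2 * moment 2 (ν (n + 1))) :=
        mul_le_mul_of_nonneg_left (hνn.norm_fourierZ_sub_one_le hm hmean t) (norm_nonneg _)
    _ = 8 * π ^ 2 * moment 2 (ν (n + 1)) * (t ^ 2 * ‖fourierZ (convProd ν n) t‖) := by ring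
    _ ≤ 8 * π ^ 2 * moment 2 (ν (n + 1)) * (exp (C * N₀ / 4) / (C * n)) := by
        gcongr; exact sq_mul_norm_fourierZ_convProd_le hν hdecay hC ht hn
    _ = _ := by field_simp

end ConvProd

-- The paper's `k ≥ 1` is `k + 1` here, so its block `4^{k-1} ≤ n < n+1 ≤ 4^k` reads `4^k ≤ n`.
theorem kernel_fourier_increment_bound_general
    (ν : ℕ → ℤ → ℝ)
    (hprob : ∀ i, 1 ≤ i → IsProbZ (ν i))
    (hmom : ∀ i, 1 ≤ i → Summable (fun k : ℤ => |(k : ℝ)| ^ (2 : ℝ) * ν i k))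
    (hexp : ∀ i, 1 ≤ i → HasSum (fun k : ℤ => (k : ℝ) * ν i k) 0)
    (C : ℝ) (hC : 0 < C) (N₀ : ℕ)
    (hfour : ∀ n, N₀ < n → ∀ t ∈ Set.Ico (-(1 : ℝ)/2) (1/2),
      ‖fourierZ (ν n) t‖ ≤ Real.exp (-C * t ^ 2))
    (μ : ℕ → ℤ → ℝ) (hμ : μ = convProd ν) :
    ∃ C' : ℝ, 0 ≤ C' ∧ ∀ k : ℕ, ∀ n : ℕ, 4 ^ k ≤ n → n + 1 ≤ 4 ^ (k + 1) →
      ∀ t ∈ Set.Ico (-(1 : ℝ)/2) (1/2),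
        ‖fourierZ (μ n) t - fourierZ (μ (n + 1)) t‖ ≤
          C' * moment 2 (ν (n + 1)) / 4 ^ (k + 1) := by
  subst hμ
  refine ⟨4 * (8 * π ^ 2 * exp (C * N₀ / 4) / C), by positivity, fun k n hk _ t ht => ?_⟩
  have hn : 0 < n := (pow_pos four_pos k).trans_le hk
  have hblock : (4 : ℝ) ^ (k + 1) ≤ 4 * n := by
    rw [pow_succ, mul_comm]; gcongr; exact_mod_cast hk
  have ht2 : t ^ 2 ≤ 1 / 4 := by nlinarith [ht.1, ht.2]
  have hM := moment_two_nonneg (hprob (n + 1) n.succ_pos).1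
  calc _ ≤ 8 * π ^ 2 * exp (C * N₀ / 4) / C * moment 2 (ν (n + 1)) / n :=
        norm_fourierZ_convProd_sub_succ_le hprob (fun i hi => hfour i hi t ht) hC ht2 hn
          (hmom _ n.succ_pos) (hexp _ n.succ_pos)
    _ = 4 * (8 * π ^ 2 * exp (C * N₀ / 4) / C) * moment 2 (ν (n + 1)) / (4 * n) := by
        field_simp
    _ ≤ _ := by gcongr

/-- **Lemma 1.4.7(2).** For `4^{k-1} ≤ n < n+1 ≤ 4^k`,
`|μ̂ₙ(t) - μ̂_{n+1}(t)| ≤ C'·m₂(ν_{n+1})/4^k`. (Here the blocks are written as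
`4^k ≤ n < n+1 ≤ 4^{k+1}`, i.e. the paper's `k` is `k + 1`.) -/
theorem kernel_fourier_increment_bound
    (ν : ℕ → ℤ → ℝ)
    (hprob : ∀ i, 1 ≤ i → IsProbZ (ν i))
    (haper : ∀ i, 1 ≤ i → StrictlyAperiodic (ν i))
    (hmom : ∀ i, 1 ≤ i → Summable (fun k : ℤ => |(k : ℝ)| ^ (2 : ℝ) * ν i k))
    (hexp : ∀ i, 1 ≤ i → HasSum (fun k : ℤ => (k : ℝ) * ν i k) 0)
    (B : ℝ) (hB : ∀ n : ℕ, 1 ≤ n → ∑ i ∈ Finset.Icc 1 n, (moment 2 (ν i)) ^ 2 ≤ B * n)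
    (C : ℝ) (hC : 0 < C) (N₀ : ℕ) (hN₀ : 0 < N₀)
    (hfour : ∀ n, N₀ < n → ∀ t ∈ Set.Ico (-(1 : ℝ)/2) (1/2),
      ‖fourierZ (ν n) t‖ ≤ Real.exp (-C * t ^ 2))
    (μ : ℕ → ℤ → ℝ) (hμ : μ = convProd ν) :
    ∃ C' : ℝ, 0 ≤ C' ∧ ∀ k : ℕ, ∀ n : ℕ, 4 ^ k ≤ n → n + 1 ≤ 4 ^ (k + 1) →
      ∀ t ∈ Set.Ico (-(1 : ℝ)/2) (1/2),
        ‖fourierZ (μ n) t - fourierZ (μ (n + 1)) t‖ ≤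
          C' * moment 2 (ν (n + 1)) / 4 ^ (k + 1) :=
  kernel_fourier_increment_bound_general ν hprob hmom hexp C hC N₀ hfour μ hμ
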